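/- arXiv:2411.13063 — 2 statements merged into one kernel-verified Lean document; each statement's English description precedes it below -/
import Mathlib

section
/- Consider the change of variables from the lower triangular coordinates (w_{i,j})_{1 ≤ j ≤ i ≤ k} with w_{i,i} > 0 to the invariants u_{i,j} = ⟨w_i, w_j⟩ = Σ_{ℓ=1}^{min(i,j)} w_{i,ℓ} w_{j,ℓ} for 1 ≤ j ≤ i ≤ k. With variables ordered lexicographically, the Jacobian matrix ∂u/∂w is lower triangular with diagonal entries (1 + δ_{i,j}) w_{j,j}, and its determinant equals 2^k √(det(G_1) det(G_2) ⋯ det(G_k)), where G_i is the Gram matrix of w_1,...,w_i. -/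
open Finset

/-- Index set for the entries `(i,j)` with `j ≤ i` of a lower triangular matrix. -/
abbrev LTIdx (k : ℕ) := {p : Fin k × Fin k // p.2 ≤ p.1}

/-- The lower triangular matrix built from the coordinates `w_{i,j}`, `j ≤ i`. -/
def toMat (k : ℕ) (w : LTIdx k → ℝ) : Matrix (Fin k) (Fin k) ℝ :=
  Matrix.of fun i j => if h : j ≤ i then w ⟨(i, j), h⟩ else 0

/-- The invariants `u_{i,j} = ⟨w_i, w_j⟩` for `j ≤ i`. -/
def uMap (k : ℕ) (w : LTIdx k → ℝ) : LTIdx k → ℝ :=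
  fun p => ∑ l : Fin k, toMat k w p.1.1 l * toMat k w p.1.2 l

/-- The Jacobian matrix `∂u/∂w`. -/
noncomputable def jacMat (k : ℕ) (w : LTIdx k → ℝ) : Matrix (LTIdx k) (LTIdx k) ℝ :=
  Matrix.of fun p q => fderiv ℝ (fun x => uMap k x p) w (Pi.single q 1)

/-- Determinant of the Gram matrix of the first `n` rows of `W`. -/
noncomputable def gramDet (k : ℕ) (W : Matrix (Fin k) (Fin k) ℝ) (n : ℕ) : ℝ :=
  Matrix.det (Matrix.of fun r s : Fin (min n k) =>
    ∑ l : Fin k, W (Fin.castLE (min_le_right n k) r) l * W (Fin.castLE (min_le_right n k) s) l)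

/-!
Since `u_{i,j} = ∑_l w_{i,l} w_{j,l}`, the partial derivative `∂u_{i,j}/∂w_{a,b}` equals
`δ_{a,j} w_{i,b} + δ_{a,i} w_{j,b}`. As `w` is lower triangular, this vanishes when `(i,j) < (a,b)`
lexicographically and equals `(1 + δ_{i,j}) w_{j,j}` on the diagonal, so the Jacobian determinant
is `2^k ∏_{j ≤ i} w_{j,j}`. The Gram matrix `G_n` of the first `n` rows is `W_n W_nᵀ`, where `W_n`
is the leading `n × n` block of the lower triangular matrix `W`, so
`det G_n = (∏_{j < n} w_{j,j})²`, and positivity of the diagonal lets us take the square root.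
-/

open Matrix

@[to_additive]
theorem Fin.prod_castLE {M : Type*} [CommMonoid M] {m k : ℕ} (h : m ≤ k) (f : Fin k → M) :
    ∏ j : Fin m, f (Fin.castLE h j) = ∏ j ∈ univ.filter (fun j : Fin k => (j : ℕ) < m), f j := by
  refine (Finset.prod_map univ (Fin.castLEEmb h) f).symm.trans
    (Finset.prod_congr ?_ fun _ _ => rfl)
  ext j
  simp only [mem_map, mem_univ, true_and, Fin.castLEEmb_apply, mem_filter]
  exact ⟨fun ⟨i, hi⟩ => hi ▸ i.2, fun hj => ⟨⟨j, hj⟩, rfl⟩⟩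

theorem prod_subtype_snd_le_fst {α M : Type*} [Fintype α] [Preorder α] [LocallyFiniteOrderBot α]
    [DecidableLE α] [CommMonoid M] (f : α × α → M) :
    ∏ p : {p : α × α // p.2 ≤ p.1}, f p.1 = ∏ i, ∏ j ∈ Iic i, f (i, j) := by
  rw [← Finset.prod_subtype (univ.filter fun p : α × α => p.2 ≤ p.1) (by simp)]
  exact Finset.prod_finset_product _ _ _ (by simp)

theorem gramDet_of_isLowerTriangular {k : ℕ} {W : Matrix (Fin k) (Fin k) ℝ}
    (hW : W.IsLowerTriangular) (n : ℕ) :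
    gramDet k W n = (∏ j ∈ univ.filter (fun j : Fin k => (j : ℕ) < n), W j j) ^ 2 := by
  set c := Fin.castLE (min_le_right n k)
  have hgram : (Matrix.of fun r s : Fin (min n k) => ∑ l : Fin k, W (c r) l * W (c s) l)
      = W.submatrix c c * (W.submatrix c c)ᵀ := by
    ext r s
    rw [of_apply, mul_apply]
    simp only [submatrix_apply, transpose_apply]
    rw [Fin.sum_castLE _ (fun l => W (c r) l * W (c s) l), Finset.sum_filter_of_ne]
    intro l _ hl
    by_contra! hlm
    exact left_ne_zero_of_mul hl (hW (show c r < l from by simp [c, Fin.lt_def]; omega))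
  have hB : (W.submatrix c c).IsLowerTriangular := fun r s hrs => hW (by simpa [c] using hrs)
  rw [gramDet, hgram, det_mul, det_transpose, det_of_isLowerTriangular _ hB, ← sq]
  simp only [submatrix_apply]
  rw [Fin.prod_castLE _ (fun j => W j j)]
  simp only [Nat.lt_min, Fin.is_lt, and_true]

theorem Matrix.det_of_lowerTriangular_of_injective {ι β R : Type*} [Fintype ι] [DecidableEq ι]
    [CommRing R] [LinearOrder β] {f : ι → β} (hf : Function.Injective f) (M : Matrix ι ι R)
    (hM : ∀ i j, f i < f j → M i j = 0) : M.det = ∏ i, M i i := by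
  let : LinearOrder ι := LinearOrder.lift' f hf
  exact det_of_isLowerTriangular M hM

section
variable {k : ℕ}

theorem toMat_isLowerTriangular (w : LTIdx k → ℝ) : (toMat k w).IsLowerTriangular :=
  fun _ _ hij => dif_neg (not_le.2 hij)

theorem toMat_single (q : LTIdx k) : toMat k (Pi.single q 1) = Matrix.single q.1.1 q.1.2 1 := by
  ext i j
  by_cases h : j ≤ i
  · simp [toMat, h, Pi.single_apply, Matrix.single_apply, Subtype.ext_iff, Prod.ext_iff, eq_comm]
  · simp only [toMat, h, of_apply, dite_false, Matrix.single_apply]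
    grind

noncomputable def toMatEntryCLM (i l : Fin k) : (LTIdx k → ℝ) →L[ℝ] ℝ :=
  if h : l ≤ i then ContinuousLinearMap.proj (⟨(i, l), h⟩ : LTIdx k) else 0

theorem toMatEntryCLM_apply (i l : Fin k) (x : LTIdx k → ℝ) :
    toMatEntryCLM i l x = toMat k x i l := by
  unfold toMatEntryCLM toMat
  split <;> simp [*]

theorem hasFDerivAt_uMap (w : LTIdx k → ℝ) (p : LTIdx k) :
    HasFDerivAt (fun x => uMap k x p)
      (∑ l, (toMat k w p.1.1 l • toMatEntryCLM p.1.2 l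
        + toMat k w p.1.2 l • toMatEntryCLM p.1.1 l)) w := by
  simp only [uMap, ← toMatEntryCLM_apply]
  exact HasFDerivAt.fun_sum fun l _ =>
    ((toMatEntryCLM p.1.1 l).hasFDerivAt.mul (toMatEntryCLM p.1.2 l).hasFDerivAt)

theorem jacMat_apply (w : LTIdx k → ℝ) (p q : LTIdx k) :
    jacMat k w p q = (if q.1.1 = p.1.2 then toMat k w p.1.1 q.1.2 else 0)
      + (if q.1.1 = p.1.1 then toMat k w p.1.2 q.1.2 else 0) := by
  simp [jacMat, (hasFDerivAt_uMap w p).fderiv, toMatEntryCLM_apply, toMat_single,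
    Matrix.single_apply, Finset.sum_add_distrib, ite_and]

theorem jacMat_eq_zero_of_lex_lt (w : LTIdx k → ℝ) {p q : LTIdx k}
    (hpq : p.1.1 < q.1.1 ∨ (p.1.1 = q.1.1 ∧ p.1.2 < q.1.2)) : jacMat k w p q = 0 := by
  obtain ⟨⟨i, j⟩, hji⟩ := p
  obtain ⟨⟨a, b⟩, hba⟩ := q
  have hW := toMat_isLowerTriangular w
  rcases hpq with hia | ⟨rfl, hjb⟩
  · simp [jacMat_apply, (hji.trans_lt hia).ne', hia.ne']
  · dsimp only at hjb ⊢
    rw [jacMat_apply, if_pos rfl, hW hjb, add_zero]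
    split_ifs with hij
    · simp only at hij
      subst hij
      exact hW hjb
    · rfl

theorem jacMat_self (w : LTIdx k → ℝ) (p : LTIdx k) :
    jacMat k w p p = (1 + if p.1.1 = p.1.2 then 1 else 0) * w ⟨(p.1.2, p.1.2), le_rfl⟩ := by
  obtain ⟨⟨i, j⟩, hji⟩ := p
  by_cases hij : i = j
  · subst hij
    simp only [jacMat_apply, ↓reduceIte, toMat, of_apply, le_refl, ↓reduceDIte]
    ring
  · simp [jacMat_apply, toMat, hij]

theorem gramDet_toMat_succ (w : LTIdx k → ℝ) (i : Fin k) :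
    gramDet k (toMat k w) (i + 1) = (∏ j ∈ Iic i, w ⟨(j, j), le_rfl⟩) ^ 2 := by
  rw [gramDet_of_isLowerTriangular (toMat_isLowerTriangular w)]
  congr 2
  · ext j
    simp only [mem_filter, mem_univ, true_and, mem_Iic, Fin.le_def]
    omega
  · exact funext fun j => by simp [toMat]

theorem prod_jacMat_self (w : LTIdx k → ℝ) :
    ∏ p, jacMat k w p p = 2 ^ k * ∏ i, ∏ j ∈ Iic i, w ⟨(j, j), le_rfl⟩ := by
  simp only [jacMat_self]
  rw [prod_subtype_snd_le_fst
    fun p => (1 + if p.1 = p.2 then (1 : ℝ) else 0) * w ⟨(p.2, p.2), le_rfl⟩]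
  have hdouble (i : Fin k) : ∏ j ∈ Iic i, (1 + if i = j then (1 : ℝ) else 0) = 2 := by
    rw [Finset.prod_eq_single_of_mem i (mem_Iic.2 le_rfl) fun j _ hji => by simp [Ne.symm hji]]
    norm_num
  simp only [Finset.prod_mul_distrib, hdouble, prod_const, card_univ, Fintype.card_fin]

end

/-- the Jacobian `∂u/∂w` is lower triangular in the lexicographic order, with
diagonal entries `(1 + δ_{i,j}) w_{j,j}`, and determinant `2^k √(det G_1 ⋯ det G_k)`. -/
theorem jacobian_lower_triangular_det (k : ℕ) (w : LTIdx k → ℝ)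
    (hpos : ∀ i : Fin k, 0 < w ⟨(i, i), le_refl i⟩) :
    (∀ p q : LTIdx k,
      (p.1.1 < q.1.1 ∨ (p.1.1 = q.1.1 ∧ p.1.2 < q.1.2)) → jacMat k w p q = 0) ∧
    (∀ p : LTIdx k,
      jacMat k w p p
        = (1 + if p.1.1 = p.1.2 then (1 : ℝ) else 0) * w ⟨(p.1.2, p.1.2), le_refl _⟩) ∧
    (jacMat k w).det = 2 ^ k * Real.sqrt (∏ i : Fin k, gramDet k (toMat k w) (i.1 + 1)) := by
  refine ⟨fun p q => jacMat_eq_zero_of_lex_lt w, jacMat_self w, ?_⟩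
  have hdet : (jacMat k w).det = ∏ p, jacMat k w p p :=
    det_of_lowerTriangular_of_injective (f := fun p : LTIdx k => toLex p.1)
      (toLex.injective.comp Subtype.val_injective) _
      fun p q hpq => jacMat_eq_zero_of_lex_lt w (Prod.Lex.toLex_lt_toLex.1 hpq)
  have hsqrt : Real.sqrt (∏ i : Fin k, gramDet k (toMat k w) (i.1 + 1))
      = ∏ i, ∏ j ∈ Iic i, w ⟨(j, j), le_rfl⟩ := by
    rw [Finset.prod_congr rfl fun i _ => gramDet_toMat_succ w i, Finset.prod_pow]
    exact Real.sqrt_sq (prod_nonneg fun i _ => prod_nonneg fun j _ => (hpos j).le)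
  rw [hdet, prod_jacMat_self, hsqrt]
end

section
/- The partial derivative of u_{i,j} = Σ_{ℓ=1}^{min(i,j)} w_{i,ℓ} w_{j,ℓ} (with j ≤ i) with respect to w_{r,s} vanishes unless (r,s) ≤ (i,j) in lexicographic order on pairs with s ≤ r; hence the Jacobian matrix of the map (w_{i,j})_{j≤i} ↦ (u_{i,j})_{j≤i} is lower triangular in lexicographic ordering. -/
/-!
Every monomial of `u_{i,j}` is built from entries `w_{a,l}` with `(a,l) ≤ (i,j)`
lexicographically, except for `w_{i,l}` with `l > j`, which only occurs multiplied by
`w_{j,l} = 0`. Hence `u_{i,j}` is constant along the coordinate line of any lexicographically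
later `w_{r,s}`, and a function constant along a direction has zero derivative in it.
-/

open Finset

theorem fderiv_apply_eq_zero_of_add_smul {𝕜 E F : Type*} [NontriviallyNormedField 𝕜]
    [NormedAddCommGroup E] [NormedSpace 𝕜 E] [NormedAddCommGroup F] [NormedSpace 𝕜 F]
    {f : E → F} {v : E} (hf : ∀ x (t : 𝕜), f (x + t • v) = f x) (w : E) :
    fderiv 𝕜 f w v = 0 := by
  by_cases hd : DifferentiableAt 𝕜 f w
  · rw [← hd.lineDeriv_eq_fderiv, lineDeriv, funext (hf w), deriv_const]
  · rw [fderiv_zero_of_not_differentiableAt hd, zero_apply]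

section

variable {k : ℕ}

theorem toMat_apply_of_lt (x : LTIdx k → ℝ) {a l : Fin k} (h : a < l) : toMat k x a l = 0 := by
  simp [toMat, not_le.2 h]

theorem toMat_add_smul_single_apply_of_ne (x : LTIdx k → ℝ) (t : ℝ) {q : LTIdx k} {a l : Fin k}
    (h : (a, l) ≠ q.1) : toMat k (x + t • Pi.single q 1) a l = toMat k x a l := by
  simp only [toMat, Matrix.of_apply]
  split_ifs with hla
  · simp [Subtype.ext_iff, h]
  · rfl

theorem uMap_add_smul_single_of_lt {p q : LTIdx k} (hpq : toLex p.1 < toLex q.1)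
    (x : LTIdx k → ℝ) (t : ℝ) : uMap k (x + t • Pi.single q 1) p = uMap k x p := by
  obtain ⟨⟨i, j⟩, hji⟩ := p
  unfold uMap
  refine sum_congr rfl fun l _ => ?_
  simp only at hji
  rcases lt_or_ge j l with hjl | hlj
  · simp only [toMat_apply_of_lt _ hjl, mul_zero]
  · have hil : toLex (i, l) ≤ toLex (i, j) := Prod.Lex.toLex_le_toLex.2 (Or.inr ⟨rfl, hlj⟩)
    have hjl : toLex (j, l) ≤ toLex (i, j) := by
      rcases hji.lt_or_eq with hji | rfl
      · exact Prod.Lex.toLex_le_toLex.2 (Or.inl hji)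
      · exact hil
    rw [toMat_add_smul_single_apply_of_ne _ _ (hil.trans_lt hpq).ne,
      toMat_add_smul_single_apply_of_ne _ _ (hjl.trans_lt hpq).ne]

end

/-- the partial derivative `∂u_{i,j}/∂w_{r,s}` vanishes unless
`(r,s) ≤ (i,j)` in the lexicographic order; i.e. the Jacobian of `w ↦ u` is lower
triangular with respect to the lexicographic ordering. -/
theorem jacobian_is_lower_triangular (k : ℕ) (w : LTIdx k → ℝ) :
    ∀ p q : LTIdx k,
      (p.1.1 < q.1.1 ∨ (p.1.1 = q.1.1 ∧ p.1.2 < q.1.2)) →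
      fderiv ℝ (fun x => uMap k x p) w (Pi.single q 1) = 0 := by
  intro p q hpq
  exact fderiv_apply_eq_zero_of_add_smul
    (uMap_add_smul_single_of_lt (Prod.Lex.toLex_lt_toLex.2 hpq)) w
end
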